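/- Set Δ* = θp − θq and, for Δ ∈ ℝ^k satisfying the integrability conditions that x ↦ ⟨Δ, t(x)⟩ and x ↦ ⟨Δ*, t(x)⟩ are integrable with respect to the measure p·dν and that N(Δ; q) := ∫ q(x)·exp(⟨Δ, t(x)⟩) dν(x) < ∞, define the population KLIEP loss ℓ_pop(Δ) = −∫ ⟨Δ, t(x)⟩ p(x) dν(x) + log N(Δ; q). Then Δ* minimizes the population KLIEP loss: ℓ_pop(Δ*) ≤ ℓ_pop(Δ) for every such Δ. (Minimizer part of Proposition 1.) -/

import Mathlib

open scoped RealInnerProductSpace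
open MeasureTheory

/-- The normalizing constant `Z(θ) = ∫ exp ⟪θ, t x⟫ dν(x)` of the exponential family. -/
noncomputable def expFamZ {Ω : Type*} [MeasurableSpace Ω] (ν : Measure Ω) {k : ℕ}
    (t : Ω → EuclideanSpace ℝ (Fin k)) (θ : EuclideanSpace ℝ (Fin k)) : ℝ :=
  ∫ x, Real.exp ⟪θ, t x⟫ ∂ν

/-- The exponential family density `f(x; θ) = exp ⟪θ, t x⟫ / Z(θ)`. -/
noncomputable def expFamDensity {Ω : Type*} [MeasurableSpace Ω] (ν : Measure Ω) {k : ℕ}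
    (t : Ω → EuclideanSpace ℝ (Fin k)) (θ : EuclideanSpace ℝ (Fin k)) (x : Ω) : ℝ :=
  Real.exp ⟪θ, t x⟫ / expFamZ ν t θ

/-- The KLIEP normalizer `N(Δ; q) = ∫ q(x)·exp ⟪Δ, t x⟫ dν(x)`, with `q = f(·; θq)`. -/
noncomputable def kliepN {Ω : Type*} [MeasurableSpace Ω] (ν : Measure Ω) {k : ℕ}
    (t : Ω → EuclideanSpace ℝ (Fin k)) (θq : EuclideanSpace ℝ (Fin k))
    (Δ : EuclideanSpace ℝ (Fin k)) : ℝ :=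
  ∫ x, expFamDensity ν t θq x * Real.exp ⟪Δ, t x⟫ ∂ν
/-- The population KLIEP loss
`ℓ_pop(Δ) = -∫ ⟪Δ, t x⟫ p(x) dν(x) + log N(Δ; q)`, with `p = f(·; θp)` and `q = f(·; θq)`. -/
noncomputable def kliepPopLoss {Ω : Type*} [MeasurableSpace Ω] (ν : Measure Ω) {k : ℕ}
    (t : Ω → EuclideanSpace ℝ (Fin k)) (θp θq : EuclideanSpace ℝ (Fin k))
    (Δ : EuclideanSpace ℝ (Fin k)) : ℝ :=
  -(∫ x, ⟪Δ, t x⟫ * expFamDensity ν t θp x ∂ν) + Real.log (kliepN ν t θq Δ)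

/-!
With `g = ⟪Δ - (θp - θq), t⟫`, the identity `exp g · p = (Z(θq) / Z(θp)) · q · exp ⟪Δ, t⟫` turns
`ℓ_pop(Δ) - ℓ_pop(θp - θq)` into `log ∫ exp g · p dν - ∫ g · p dν`, which is nonnegative by Gibbs'
inequality for the probability density `p`.
-/

open Real

section Gibbs

variable {α : Type*} [MeasurableSpace α] {μ : Measure α} {P g : α → ℝ}

theorem integral_exp_mul_pos (hP0 : 0 ≤ P) (hP1 : ∫ x, P x ∂μ = 1)
    (hegP : Integrable (fun x => exp (g x) * P x) μ) : 0 < ∫ x, exp (g x) * P x ∂μ := by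
  have hP : Integrable P μ := .of_integral_ne_zero (by simp [hP1])
  have hsupp : Function.support (fun x => exp (g x) * P x) = Function.support P := by
    ext x
    simp [(exp_pos (g x)).ne']
  rw [integral_pos_iff_support_of_nonneg (fun x => mul_nonneg (exp_nonneg _) (hP0 x)) hegP, hsupp,
    ← integral_pos_iff_support_of_nonneg hP0 hP, hP1]
  exact one_pos

/-- Integrate the tangent-line bound `g - log M + 1 ≤ exp g / M`, `M = ∫ exp g · P`, against `P`. -/
theorem integral_mul_le_log_integral_exp_mul (hP0 : 0 ≤ P) (hP1 : ∫ x, P x ∂μ = 1)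
    (hgP : Integrable (fun x => g x * P x) μ) (hegP : Integrable (fun x => exp (g x) * P x) μ) :
    ∫ x, g x * P x ∂μ ≤ log (∫ x, exp (g x) * P x ∂μ) := by
  have hP : Integrable P μ := .of_integral_ne_zero (by simp [hP1])
  set M := ∫ x, exp (g x) * P x ∂μ
  have hM : 0 < M := integral_exp_mul_pos hP0 hP1 hegP
  have htangent : ∀ x, g x * P x ≤ (exp (g x) * P x) / M + (log M - 1) * P x := by
    intro x
    have h := add_one_le_exp (g x - log M)
    rw [exp_sub, exp_log hM] at h
    have := mul_le_mul_of_nonneg_right h (hP0 x)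
    rw [div_mul_eq_mul_div] at this
    linarith
  calc ∫ x, g x * P x ∂μ
      ≤ ∫ x, (exp (g x) * P x) / M + (log M - 1) * P x ∂μ :=
        integral_mono hgP ((hegP.div_const M).add (hP.const_mul _)) htangent
    _ = log M := by
        rw [integral_add (hegP.div_const M) (hP.const_mul _), integral_div, integral_const_mul,
          hP1, div_self hM.ne']
        ring

end Gibbs

section ExpFamily

variable {Ω : Type*} [MeasurableSpace Ω] {ν : Measure Ω} {k : ℕ}
  {t : Ω → EuclideanSpace ℝ (Fin k)}

theorem expFamDensity_nonneg {θ : EuclideanSpace ℝ (Fin k)} (hZ : 0 ≤ expFamZ ν t θ) :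
    0 ≤ expFamDensity ν t θ := fun _ => div_nonneg (exp_nonneg _) hZ

theorem integral_expFamDensity {θ : EuclideanSpace ℝ (Fin k)} (hZ : expFamZ ν t θ ≠ 0) :
    ∫ x, expFamDensity ν t θ x ∂ν = 1 := by
  simp only [expFamDensity, integral_div]
  exact div_self hZ

theorem expFamDensity_mul_exp_inner_sub {θp θq : EuclideanSpace ℝ (Fin k)}
    (hZp : expFamZ ν t θp ≠ 0) (hZq : expFamZ ν t θq ≠ 0) (Δ : EuclideanSpace ℝ (Fin k)) (x : Ω) :
    exp ⟪Δ - (θp - θq), t x⟫ * expFamDensity ν t θp x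
      = expFamDensity ν t θq x * exp ⟪Δ, t x⟫ * (expFamZ ν t θq / expFamZ ν t θp) := by
  simp only [expFamDensity, inner_sub_left, exp_sub]
  field_simp

variable {θp θq : EuclideanSpace ℝ (Fin k)}

theorem integral_exp_inner_sub_mul_expFamDensity (hZp : expFamZ ν t θp ≠ 0)
    (hZq : expFamZ ν t θq ≠ 0) (Δ : EuclideanSpace ℝ (Fin k)) :
    ∫ x, exp ⟪Δ - (θp - θq), t x⟫ * expFamDensity ν t θp x ∂ν
      = kliepN ν t θq Δ * (expFamZ ν t θq / expFamZ ν t θp) := by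
  simp only [expFamDensity_mul_exp_inner_sub hZp hZq, integral_mul_const, kliepN]

theorem kliepN_sub (hZp : expFamZ ν t θp ≠ 0) (hZq : expFamZ ν t θq ≠ 0) :
    kliepN ν t θq (θp - θq) = expFamZ ν t θp / expFamZ ν t θq := by
  have h := integral_exp_inner_sub_mul_expFamDensity hZp hZq (θp - θq)
  simp only [sub_self, inner_zero_left, exp_zero, one_mul, integral_expFamDensity hZp] at h
  field_simp at h ⊢
  linarith

theorem kliepPopLoss_sub_kliepPopLoss (hZp : 0 < expFamZ ν t θp) (hZq : 0 < expFamZ ν t θq)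
    {Δ : EuclideanSpace ℝ (Fin k)}
    (hΔ : Integrable (fun x => ⟪Δ, t x⟫ * expFamDensity ν t θp x) ν)
    (hΔs : Integrable (fun x => ⟪θp - θq, t x⟫ * expFamDensity ν t θp x) ν)
    (hN : 0 < kliepN ν t θq Δ) :
    kliepPopLoss ν t θp θq Δ - kliepPopLoss ν t θp θq (θp - θq)
      = log (∫ x, exp ⟪Δ - (θp - θq), t x⟫ * expFamDensity ν t θp x ∂ν)
        - ∫ x, ⟪Δ - (θp - θq), t x⟫ * expFamDensity ν t θp x ∂ν := by
  have hsplit : ∫ x, ⟪Δ - (θp - θq), t x⟫ * expFamDensity ν t θp x ∂ν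
      = ∫ x, ⟪Δ, t x⟫ * expFamDensity ν t θp x ∂ν
        - ∫ x, ⟪θp - θq, t x⟫ * expFamDensity ν t θp x ∂ν := by
    rw [← integral_sub hΔ hΔs]
    simp only [inner_sub_left, sub_mul]
  rw [integral_exp_inner_sub_mul_expFamDensity hZp.ne' hZq.ne', hsplit, kliepPopLoss,
    kliepPopLoss, kliepN_sub hZp.ne' hZq.ne', log_mul hN.ne' (by positivity),
    log_div hZp.ne' hZq.ne', log_div hZq.ne' hZp.ne']
  ring

end ExpFamily

theorem kliepPopLoss_min_general {Ω : Type*} [MeasurableSpace Ω] (ν : Measure Ω) {k : ℕ}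
    (t : Ω → EuclideanSpace ℝ (Fin k))
    (θp θq : EuclideanSpace ℝ (Fin k))
    (hZp : 0 < expFamZ ν t θp) (hZq : 0 < expFamZ ν t θq) :
    ∀ Δ : EuclideanSpace ℝ (Fin k),
      Integrable (fun x => ⟪Δ, t x⟫ * expFamDensity ν t θp x) ν →
      Integrable (fun x => ⟪θp - θq, t x⟫ * expFamDensity ν t θp x) ν →
      Integrable (fun x => expFamDensity ν t θq x * Real.exp ⟪Δ, t x⟫) ν →
      kliepPopLoss ν t θp θq (θp - θq) ≤ kliepPopLoss ν t θp θq Δ := by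
  intro Δ hΔ hΔs hN
  have hp0 := expFamDensity_nonneg hZp.le (ν := ν) (t := t)
  have hp1 := integral_expFamDensity hZp.ne' (ν := ν) (t := t)
  have hgP : Integrable (fun x => ⟪Δ - (θp - θq), t x⟫ * expFamDensity ν t θp x) ν := by
    refine (hΔ.sub hΔs).congr (ae_of_all _ fun x => ?_)
    simp only [Pi.sub_apply, inner_sub_left, sub_mul]
  have hegP : Integrable (fun x => exp ⟪Δ - (θp - θq), t x⟫ * expFamDensity ν t θp x) ν := by
    simpa only [expFamDensity_mul_exp_inner_sub hZp.ne' hZq.ne'] using hN.mul_const _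
  have hNpos : 0 < kliepN ν t θq Δ := by
    have h := integral_exp_mul_pos hp0 hp1 hegP
    rw [integral_exp_inner_sub_mul_expFamDensity hZp.ne' hZq.ne'] at h
    exact pos_of_mul_pos_left h (div_pos hZq hZp).le
  have hgap := kliepPopLoss_sub_kliepPopLoss hZp hZq hΔ hΔs hNpos
  linarith [integral_mul_le_log_integral_exp_mul hp0 hp1 hgP hegP]

/-- Minimizer part of Proposition 1: `Δ* = θp - θq` minimizes the population KLIEP loss
over all `Δ` satisfying the integrability conditions. -/
theorem kliepPopLoss_min {Ω : Type*} [MeasurableSpace Ω] (ν : Measure Ω) {k : ℕ}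
    (t : Ω → EuclideanSpace ℝ (Fin k)) (ht : Measurable t)
    (θp θq : EuclideanSpace ℝ (Fin k))
    (hip : Integrable (fun x => Real.exp ⟪θp, t x⟫) ν)
    (hiq : Integrable (fun x => Real.exp ⟪θq, t x⟫) ν)
    (hZp : 0 < expFamZ ν t θp) (hZq : 0 < expFamZ ν t θq) :
    ∀ Δ : EuclideanSpace ℝ (Fin k),
      Integrable (fun x => ⟪Δ, t x⟫ * expFamDensity ν t θp x) ν →
      Integrable (fun x => ⟪θp - θq, t x⟫ * expFamDensity ν t θp x) ν →
      Integrable (fun x => expFamDensity ν t θq x * Real.exp ⟪Δ, t x⟫) ν →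
      kliepPopLoss ν t θp θq (θp - θq) ≤ kliepPopLoss ν t θp θq Δ :=
  kliepPopLoss_min_general ν t θp θq hZp hZq
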